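/- If a closed term M has type T in the second (necessary) type system and M evaluates under role A to a value (A ⊢ M →* V), then A dominates T. -/

import Mathlib

namespace LRBAC

/-- Role domination: `dom A B` means `A = A ⊔ B`. -/
def dom {R : Type*} [BooleanAlgebra R] (A B : R) : Prop := A = A ⊔ B

/-- Role modifiers: amplification `up A` and restriction `dn A`. -/
inductive Mod (R : Type*) where
  | up (A : R)
  | dn (A : R)

/-- Applying a role modifier to a context role. -/
def Mod.app {R : Type*} [BooleanAlgebra R] : Mod R → R → R
  | .up A, C => A ⊔ C
  | .dn A, C => A ⊓ C

/-- Terms of λ-RBAC (de Bruijn representation). -/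
inductive Tm (R : Type*) where
  | base (n : ℕ)
  | var (n : ℕ)
  | abs (M : Tm R)
  | app (M N : Tm R)
  | fix (M : Tm R)
  | grd (A : R) (M : Tm R)
  | chk (M : Tm R)
  | unit (M : Tm R)
  | bind (M N : Tm R)
  | mod (m : Mod R) (M : Tm R)

/-- de Bruijn shifting. -/
def Tm.shift {R : Type*} (d : ℕ) : ℕ → Tm R → Tm R
  | _, .base n => .base n
  | c, .var n => .var (if n < c then n else n + d)
  | c, .abs M => .abs (Tm.shift d (c+1) M)
  | c, .app M N => .app (Tm.shift d c M) (Tm.shift d c N)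
  | c, .fix M => .fix (Tm.shift d c M)
  | c, .grd A M => .grd A (Tm.shift d c M)
  | c, .chk M => .chk (Tm.shift d c M)
  | c, .unit M => .unit (Tm.shift d c M)
  | c, .bind M N => .bind (Tm.shift d c M) (Tm.shift d (c+1) N)
  | c, .mod m M => .mod m (Tm.shift d c M)

/-- Capture-avoiding substitution: `Tm.subst k N M = M[k := N]`. -/
def Tm.subst {R : Type*} : ℕ → Tm R → Tm R → Tm R
  | _, _, .base n => .base n
  | k, N, .var n => if n = k then N else if k < n then .var (n-1) else .var n
  | k, N, .abs M => .abs (Tm.subst (k+1) (Tm.shift 1 0 N) M)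
  | k, N, .app M M' => .app (Tm.subst k N M) (Tm.subst k N M')
  | k, N, .fix M => .fix (Tm.subst k N M)
  | k, N, .grd A M => .grd A (Tm.subst k N M)
  | k, N, .chk M => .chk (Tm.subst k N M)
  | k, N, .unit M => .unit (Tm.subst k N M)
  | k, N, .bind M M' => .bind (Tm.subst k N M) (Tm.subst (k+1) (Tm.shift 1 0 N) M')
  | k, N, .mod m M => .mod m (Tm.subst k N M)

/-- Values. -/
inductive Tm.IsValue {R : Type*} : Tm R → Prop
  | base (n : ℕ) : Tm.IsValue (.base n)
  | var (n : ℕ) : Tm.IsValue (.var n)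
  | abs (M : Tm R) : Tm.IsValue (.abs M)
  | grd (A : R) (M : Tm R) : Tm.IsValue (.grd A M)
  | unit (M : Tm R) : Tm.IsValue (.unit M)

variable {R : Type*} [BooleanAlgebra R]

/-- Role-indexed small-step evaluation `A ⊢ M → M'`. -/
inductive Eval : R → Tm R → Tm R → Prop
  | rApp {A : R} {M N : Tm R} : Eval A (.app (.abs M) N) (Tm.subst 0 N M)
  | cApp {A : R} {M M' N : Tm R} : Eval A M M' → Eval A (.app M N) (.app M' N)
  | rFix {A : R} {M : Tm R} :
      Eval A (.fix (.abs M)) (Tm.subst 0 (.fix (.abs M)) M)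
  | cFix {A : R} {M M' : Tm R} : Eval A M M' → Eval A (.fix M) (.fix M')
  | rChk {A B : R} {M : Tm R} : dom A B → Eval A (.chk (.grd B M)) (.unit M)
  | cChk {A : R} {M M' : Tm R} : Eval A M M' → Eval A (.chk M) (.chk M')
  | rBind {A : R} {M N : Tm R} : Eval A (.bind (.unit M) N) (Tm.subst 0 M N)
  | cBind {A : R} {M M' N : Tm R} : Eval A M M' → Eval A (.bind M N) (.bind M' N)
  | rMod {A : R} {m : Mod R} {V : Tm R} : V.IsValue → Eval A (.mod m V) V
  | cMod {A : R} {m : Mod R} {M M' : Tm R} :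
      Eval (m.app A) M M' → Eval A (.mod m M) (.mod m M')

/-- Role errors `M ⇑ᴬ err`. -/
inductive Err : R → Tm R → Prop
  | chk {A B : R} {M : Tm R} : ¬ dom A B → Err A (.chk (.grd B M))
  | ctxApp {A : R} {M N : Tm R} : Err A M → Err A (.app M N)
  | ctxFix {A : R} {M : Tm R} : Err A M → Err A (.fix M)
  | ctxBind {A : R} {M N : Tm R} : Err A M → Err A (.bind M N)
  | ctxChk {A : R} {M : Tm R} : Err A M → Err A (.chk M)
  | ctxMod {A : R} {m : Mod R} {M : Tm R} : Err (m.app A) M → Err A (.mod m M)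

/-- Multi-step evaluation. -/
def Evals (A : R) : Tm R → Tm R → Prop := Relation.ReflTransGen (Eval A)

/-- Divergence under context role `A`. -/
def Diverges (A : R) (M : Tm R) : Prop :=
  ∃ f : ℕ → Tm R, f 0 = M ∧ ∀ n, Eval A (f n) (f (n+1))

/-- Types: base, arrow, guard `A⊳T`, computation `A○T`. -/
inductive Ty (R : Type*) where
  | base
  | arrow (S T : Ty R)
  | grd (A : R) (T : Ty R)
  | comp (A : R) (T : Ty R)

/-- Subtyping, indexed by the system: `true` is the first ("sufficient")
system, `false` the second ("necessary") one. -/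
inductive Sub : Bool → Ty R → Ty R → Prop
  | base {s} : Sub s .base .base
  | arrow {s} {S S' T T' : Ty R} :
      Sub s S' S → Sub s T T' → Sub s (.arrow S T) (.arrow S' T')
  | grd {s} {A A' : R} {T T' : Ty R} :
      (s = true → dom A' A) → (s = false → dom A A') → Sub s T T' →
      Sub s (.grd A T) (.grd A' T')
  | comp {s} {A A' : R} {T T' : Ty R} :
      (s = true → dom A' A) → (s = false → dom A A') → Sub s T T' →
      Sub s (.comp A T) (.comp A' T')

/-- Typing judgment of the two λ-RBAC type systems. -/
inductive Typing : Bool → List (Ty R) → Tm R → Ty R → Prop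
  | base {s Γ n} : Typing s Γ (.base n) .base
  | var {s Γ n T} : Γ[n]? = some T → Typing s Γ (.var n) T
  | sub {s Γ M T T'} : Typing s Γ M T → Sub s T T' → Typing s Γ M T'
  | abs {s Γ M S T} : Typing s (S :: Γ) M T → Typing s Γ (.abs M) (.arrow S T)
  | app {s Γ M N S T} :
      Typing s Γ M (.arrow S T) → Typing s Γ N S → Typing s Γ (.app M N) T
  | fix {s Γ M T} : Typing s Γ M (.arrow T T) → Typing s Γ (.fix M) T
  | grd {s Γ M A T} : Typing s Γ M T → Typing s Γ (.grd A M) (.grd A T)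
  | chk {s Γ M A T} : Typing s Γ M (.grd A T) → Typing s Γ (.chk M) (.comp A T)
  | unit {s Γ M T} : Typing s Γ M T → Typing s Γ (.unit M) (.comp ⊥ T)
  | bind {s Γ M N A B T S} :
      Typing s Γ M (.comp A T) → Typing s (T :: Γ) N (.comp B S) →
      Typing s Γ (.bind M N) (.comp (A ⊔ B) S)
  | modUp {s Γ M A B T} :
      Typing s Γ M (.comp B T) →
      Typing s Γ (.mod (.up A) M) (.comp (B ⊓ Aᶜ) T)
  | modDn {s Γ M A B T} :
      Typing s Γ M (.comp B T) → (s = true → dom A B) →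
      Typing s Γ (.mod (.dn A) M) (.comp B T)

/-- Type compatibility. -/
def Compat (T S : Ty R) : Prop :=
  T = S ∨ ∃ (A B : R) (U : Ty R), T = .comp A U ∧ S = .comp B U

/-- A role dominates a type. -/
def DomTy (A : R) : Ty R → Prop
  | .comp B _ => dom A B
  | _ => True

end LRBAC

open LRBAC

namespace LRBAC
section Aux
variable {R : Type*} [BooleanAlgebra R]

theorem dom_iff {A B : R} : dom A B ↔ B ≤ A := by
  rw [dom, eq_comm, sup_eq_left]

theorem dom_of_le {A B : R} (h : B ≤ A) : dom A B := dom_iff.mpr h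

theorem sub_refl (s : Bool) (T : Ty R) : Sub s T T := by
  induction T with
  | base => exact .base
  | arrow S T ihS ihT => exact .arrow ihS ihT
  | grd A T ih => exact .grd (fun _ => dom_of_le le_rfl) (fun _ => dom_of_le le_rfl) ih
  | comp A T ih => exact .comp (fun _ => dom_of_le le_rfl) (fun _ => dom_of_le le_rfl) ih

theorem sub_trans {s : Bool} {T1 T2 T3 : Ty R} (h1 : Sub s T1 T2) (h2 : Sub s T2 T3) :
    Sub s T1 T3 := by
  induction T2 generalizing T1 T3 with
  | base => cases h1; exact h2
  | arrow S T ihS ihT =>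
    cases h1 with
    | arrow hS1 hT1 =>
      cases h2 with
      | arrow hS2 hT2 => exact .arrow (ihS hS2 hS1) (ihT hT1 hT2)
  | grd A T ih =>
    cases h1 with
    | grd d1 d1' hT1 =>
      cases h2 with
      | grd d2 d2' hT2 =>
        exact .grd (fun hs => dom_of_le (le_trans (dom_iff.mp (d1 hs)) (dom_iff.mp (d2 hs))))
          (fun hs => dom_of_le (le_trans (dom_iff.mp (d2' hs)) (dom_iff.mp (d1' hs))))
          (ih hT1 hT2)
  | comp A T ih =>
    cases h1 with
    | comp d1 d1' hT1 =>
      cases h2 with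
      | comp d2 d2' hT2 =>
        exact .comp (fun hs => dom_of_le (le_trans (dom_iff.mp (d1 hs)) (dom_iff.mp (d2 hs))))
          (fun hs => dom_of_le (le_trans (dom_iff.mp (d2' hs)) (dom_iff.mp (d1' hs))))
          (ih hT1 hT2)

theorem sub_inv_comp_left {B : R} {U T : Ty R} (h : Sub false (.comp B U) T) :
    ∃ B' U', T = .comp B' U' ∧ B' ≤ B ∧ Sub false U U' := by
  cases h with
  | comp d d' hU => exact ⟨_, _, rfl, dom_iff.mp (d' rfl), hU⟩

theorem sub_inv_comp_right {B : R} {U X : Ty R} (h : Sub false X (.comp B U)) :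
    ∃ B₁ U₁, X = .comp B₁ U₁ ∧ B ≤ B₁ ∧ Sub false U₁ U := by
  cases h with
  | comp d d' hU => exact ⟨_, _, rfl, dom_iff.mp (d' rfl), hU⟩

theorem sub_inv_grd_right {B : R} {U X : Ty R} (h : Sub false X (.grd B U)) :
    ∃ B₁ U₁, X = .grd B₁ U₁ ∧ B ≤ B₁ ∧ Sub false U₁ U := by
  cases h with
  | grd d d' hU => exact ⟨_, _, rfl, dom_iff.mp (d' rfl), hU⟩

theorem sub_inv_arrow_right {S T : Ty R} {X : Ty R} (h : Sub false X (.arrow S T)) :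
    ∃ S₁ T₁, X = .arrow S₁ T₁ ∧ Sub false S S₁ ∧ Sub false T₁ T := by
  cases h with
  | arrow hS hT => exact ⟨_, _, rfl, hS, hT⟩

end Aux
section Aux2
variable {R : Type*} [BooleanAlgebra R]

theorem shift_id {s : Bool} {Γ : List (Ty R)} {N : Tm R} {S : Ty R}
    (h : Typing s Γ N S) : ∀ d c, Γ.length ≤ c → Tm.shift d c N = N := by
  induction h with
  | base => intro d c _; rfl
  | var hl =>
    intro d c hc
    have hn := List.getElem?_eq_some_iff.mp hl
    simp [Tm.shift, Nat.lt_of_lt_of_le hn.1 hc]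
  | sub _ _ ih => exact ih
  | abs _ ih =>
    intro d c hc
    simp only [Tm.shift]
    rw [ih d (c+1) (by simpa using Nat.succ_le_succ hc)]
  | app _ _ ih1 ih2 =>
    intro d c hc; simp only [Tm.shift]; rw [ih1 d c hc, ih2 d c hc]
  | fix _ ih => intro d c hc; simp only [Tm.shift]; rw [ih d c hc]
  | grd _ ih => intro d c hc; simp only [Tm.shift]; rw [ih d c hc]
  | chk _ ih => intro d c hc; simp only [Tm.shift]; rw [ih d c hc]
  | unit _ ih => intro d c hc; simp only [Tm.shift]; rw [ih d c hc]
  | bind _ _ ih1 ih2 =>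
    intro d c hc; simp only [Tm.shift]
    rw [ih1 d c hc, ih2 d (c+1) (by simpa using Nat.succ_le_succ hc)]
  | modUp _ ih => intro d c hc; simp only [Tm.shift]; rw [ih d c hc]
  | modDn _ _ ih => intro d c hc; simp only [Tm.shift]; rw [ih d c hc]

theorem weaken {s : Bool} {Γ : List (Ty R)} {N : Tm R} {S : Ty R}
    (h : Typing s Γ N S) : ∀ Δ, Typing s (Γ ++ Δ) N S := by
  induction h with
  | base => intro Δ; exact .base
  | var hl =>
    intro Δ
    refine .var ?_
    have hn := List.getElem?_eq_some_iff.mp hl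
    rw [List.getElem?_append_left hn.1]; exact hl
  | sub _ hs ih => exact fun Δ => .sub (ih Δ) hs
  | abs _ ih => exact fun Δ => .abs (ih Δ)
  | app _ _ ih1 ih2 => exact fun Δ => .app (ih1 Δ) (ih2 Δ)
  | fix _ ih => exact fun Δ => .fix (ih Δ)
  | grd _ ih => exact fun Δ => .grd (ih Δ)
  | chk _ ih => exact fun Δ => .chk (ih Δ)
  | unit _ ih => exact fun Δ => .unit (ih Δ)
  | bind _ _ ih1 ih2 => exact fun Δ => .bind (ih1 Δ) (ih2 Δ)
  | modUp _ ih => exact fun Δ => .modUp (ih Δ)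
  | modDn _ hc ih => exact fun Δ => .modDn (ih Δ) hc

theorem subst_lemma {s : Bool} {N : Tm R} {S : Ty R} (hN : Typing s [] N S) :
    ∀ {Γ M T}, Typing s Γ M T → ∀ Δ, Γ = Δ ++ [S] →
      Typing s Δ (Tm.subst Δ.length N M) T := by
  have hNs : ∀ d c, Tm.shift d c N = N := fun d c => shift_id hN d c (by simp)
  intro Γ M T h
  induction h with
  | base => intro Δ _; exact .base
  | @var _ n T hl =>
    intro Δ hΓ
    subst hΓ
    rcases lt_trichotomy n Δ.length with hn | hn | hn
    · have : (Tm.subst Δ.length N (.var n) : Tm R) = .var n := by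
        simp [Tm.subst, Nat.ne_of_lt hn, Nat.not_lt.mpr (Nat.le_of_lt hn)]
      rw [this]
      exact .var (by rw [← List.getElem?_append_left hn]; exact hl)
    · have e : (Tm.subst Δ.length N (.var n) : Tm R) = N := by simp [Tm.subst, hn]
      rw [e]
      have hTS : T = S := by
        rw [hn, List.getElem?_append_right (le_refl Δ.length)] at hl
        simpa using hl.symm
      subst hTS
      simpa using weaken hN Δ
    · exfalso
      have : (Δ ++ [S])[n]? = none := by
        rw [List.getElem?_eq_none]
        simp [Nat.succ_le_of_lt hn]
      rw [this] at hl; cases hl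
  | sub _ hs ih => exact fun Δ hΓ => .sub (ih Δ hΓ) hs
  | @abs _ M S₀ T₀ _ ih =>
    intro Δ hΓ
    subst hΓ
    have := ih (S₀ :: Δ) rfl
    simp only [List.length_cons] at this
    simp only [Tm.subst, hNs]
    exact .abs this
  | app _ _ ih1 ih2 => exact fun Δ hΓ => .app (ih1 Δ hΓ) (ih2 Δ hΓ)
  | fix _ ih => exact fun Δ hΓ => .fix (ih Δ hΓ)
  | grd _ ih => exact fun Δ hΓ => .grd (ih Δ hΓ)
  | chk _ ih => exact fun Δ hΓ => .chk (ih Δ hΓ)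
  | unit _ ih => exact fun Δ hΓ => .unit (ih Δ hΓ)
  | @bind _ _ _ _ _ T₀ _ _ _ ih1 ih2 =>
    intro Δ hΓ
    subst hΓ
    have h2 := ih2 (T₀ :: Δ) rfl
    simp only [List.length_cons] at h2
    simp only [Tm.subst, hNs]
    exact .bind (ih1 Δ rfl) h2
  | modUp _ ih => exact fun Δ hΓ => .modUp (ih Δ hΓ)
  | modDn _ hc ih => exact fun Δ hΓ => .modDn (ih Δ hΓ) hc

end Aux2
section Aux3
variable {R : Type*} [BooleanAlgebra R]

theorem inv_app {Γ : List (Ty R)} {q : Tm R} {T : Ty R} (h : Typing false Γ q T) :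
    ∀ M N, q = .app M N →
      ∃ S T', Typing false Γ M (.arrow S T') ∧ Typing false Γ N S ∧ Sub false T' T := by
  induction h with
  | sub _ hs ih =>
    intro M N hq
    obtain ⟨S, T', h1, h2, h3⟩ := ih M N hq
    exact ⟨S, T', h1, h2, sub_trans h3 hs⟩
  | app h1 h2 =>
    intro M N hq
    injection hq with e1 e2; subst e1; subst e2
    exact ⟨_, _, h1, h2, sub_refl _ _⟩
  | base => intro _ _ hq; cases hq
  | var _ => intro _ _ hq; cases hq
  | abs _ => intro _ _ hq; cases hq
  | fix _ => intro _ _ hq; cases hq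
  | grd _ => intro _ _ hq; cases hq
  | chk _ => intro _ _ hq; cases hq
  | unit _ => intro _ _ hq; cases hq
  | bind _ _ => intro _ _ hq; cases hq
  | modUp _ => intro _ _ hq; cases hq
  | modDn _ _ => intro _ _ hq; cases hq
end Aux3
section Aux4
variable {R : Type*} [BooleanAlgebra R]

theorem inv_abs {Γ : List (Ty R)} {q : Tm R} {T : Ty R} (h : Typing false Γ q T) :
    ∀ M, q = .abs M → ∀ S T₀, T = .arrow S T₀ →
      ∃ S' T', Typing false (S' :: Γ) M T' ∧ Sub false S S' ∧ Sub false T' T₀ := by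
  induction h with
  | sub _ hs ih =>
    intro M hq S T₀ hT
    subst hT
    obtain ⟨S₁, T₁, hq1, hS1, hT1⟩ := sub_inv_arrow_right hs
    obtain ⟨S', T', hb, hS, hT⟩ := ih M hq S₁ T₁ hq1
    exact ⟨S', T', hb, sub_trans hS1 hS, sub_trans hT hT1⟩
  | abs hb =>
    intro M hq S T₀ hT
    injection hq with e; subst e
    injection hT with e1 e2; subst e1; subst e2
    exact ⟨_, _, hb, sub_refl _ _, sub_refl _ _⟩
  | base => intro _ hq; cases hq
  | var _ => intro _ hq; cases hq
  | app _ _ => intro _ hq; cases hq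
  | fix _ => intro _ hq; cases hq
  | grd _ => intro _ hq; cases hq
  | chk _ => intro _ hq; cases hq
  | unit _ => intro _ hq; cases hq
  | bind _ _ => intro _ hq; cases hq
  | modUp _ => intro _ hq; cases hq
  | modDn _ _ => intro _ hq; cases hq

theorem inv_fix {Γ : List (Ty R)} {q : Tm R} {T : Ty R} (h : Typing false Γ q T) :
    ∀ M, q = .fix M →
      ∃ T', Typing false Γ M (.arrow T' T') ∧ Sub false T' T := by
  induction h with
  | sub _ hs ih =>
    intro M hq
    obtain ⟨T', h1, h2⟩ := ih M hq
    exact ⟨T', h1, sub_trans h2 hs⟩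
  | fix h1 =>
    intro M hq
    injection hq with e; subst e
    exact ⟨_, h1, sub_refl _ _⟩
  | base => intro _ hq; cases hq
  | var _ => intro _ hq; cases hq
  | abs _ => intro _ hq; cases hq
  | app _ _ => intro _ hq; cases hq
  | grd _ => intro _ hq; cases hq
  | chk _ => intro _ hq; cases hq
  | unit _ => intro _ hq; cases hq
  | bind _ _ => intro _ hq; cases hq
  | modUp _ => intro _ hq; cases hq
  | modDn _ _ => intro _ hq; cases hq

theorem inv_chk {Γ : List (Ty R)} {q : Tm R} {T : Ty R} (h : Typing false Γ q T) :
    ∀ M, q = .chk M →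
      ∃ B U, Typing false Γ M (.grd B U) ∧ Sub false (.comp B U) T := by
  induction h with
  | sub _ hs ih =>
    intro M hq
    obtain ⟨B, U, h1, h2⟩ := ih M hq
    exact ⟨B, U, h1, sub_trans h2 hs⟩
  | chk h1 =>
    intro M hq
    injection hq with e; subst e
    exact ⟨_, _, h1, sub_refl _ _⟩
  | base => intro _ hq; cases hq
  | var _ => intro _ hq; cases hq
  | abs _ => intro _ hq; cases hq
  | app _ _ => intro _ hq; cases hq
  | fix _ => intro _ hq; cases hq
  | grd _ => intro _ hq; cases hq
  | unit _ => intro _ hq; cases hq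
  | bind _ _ => intro _ hq; cases hq
  | modUp _ => intro _ hq; cases hq
  | modDn _ _ => intro _ hq; cases hq

theorem inv_grd {Γ : List (Ty R)} {q : Tm R} {T : Ty R} (h : Typing false Γ q T) :
    ∀ C M, q = .grd C M → ∀ B U, T = .grd B U →
      ∃ U', Typing false Γ M U' ∧ B ≤ C ∧ Sub false U' U := by
  induction h with
  | sub _ hs ih =>
    intro C M hq B U hT
    subst hT
    obtain ⟨B₁, U₁, hq1, hB1, hU1⟩ := sub_inv_grd_right hs
    obtain ⟨U', h1, h2, h3⟩ := ih C M hq B₁ U₁ hq1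
    exact ⟨U', h1, le_trans hB1 h2, sub_trans h3 hU1⟩
  | grd h1 =>
    intro C M hq B U hT
    injection hq with e1 e2; subst e1; subst e2
    injection hT with e3 e4; subst e3; subst e4
    exact ⟨_, h1, le_rfl, sub_refl _ _⟩
  | base => intro _ _ hq; cases hq
  | var _ => intro _ _ hq; cases hq
  | abs _ => intro _ _ hq; cases hq
  | app _ _ => intro _ _ hq; cases hq
  | fix _ => intro _ _ hq; cases hq
  | chk _ => intro _ _ hq; cases hq
  | unit _ => intro _ _ hq; cases hq
  | bind _ _ => intro _ _ hq; cases hq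
  | modUp _ => intro _ _ hq; cases hq
  | modDn _ _ => intro _ _ hq; cases hq

theorem inv_unit {Γ : List (Ty R)} {q : Tm R} {T : Ty R} (h : Typing false Γ q T) :
    ∀ M, q = .unit M → ∀ B U, T = .comp B U →
      ∃ U', Typing false Γ M U' ∧ B ≤ ⊥ ∧ Sub false U' U := by
  induction h with
  | sub _ hs ih =>
    intro M hq B U hT
    subst hT
    obtain ⟨B₁, U₁, hq1, hB1, hU1⟩ := sub_inv_comp_right hs
    obtain ⟨U', h1, h2, h3⟩ := ih M hq B₁ U₁ hq1
    exact ⟨U', h1, le_trans hB1 h2, sub_trans h3 hU1⟩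
  | unit h1 =>
    intro M hq B U hT
    injection hq with e; subst e
    injection hT with e1 e2; subst e1; subst e2
    exact ⟨_, h1, le_rfl, sub_refl _ _⟩
  | base => intro _ hq; cases hq
  | var _ => intro _ hq; cases hq
  | abs _ => intro _ hq; cases hq
  | app _ _ => intro _ hq; cases hq
  | fix _ => intro _ hq; cases hq
  | grd _ => intro _ hq; cases hq
  | chk _ => intro _ hq; cases hq
  | bind _ _ => intro _ hq; cases hq
  | modUp _ => intro _ hq; cases hq
  | modDn _ _ => intro _ hq; cases hq

theorem inv_bind {Γ : List (Ty R)} {q : Tm R} {T : Ty R} (h : Typing false Γ q T) :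
    ∀ M N, q = .bind M N →
      ∃ B₁ B₂ U S, Typing false Γ M (.comp B₁ U) ∧ Typing false (U :: Γ) N (.comp B₂ S) ∧
        Sub false (.comp (B₁ ⊔ B₂) S) T := by
  induction h with
  | sub _ hs ih =>
    intro M N hq
    obtain ⟨B₁, B₂, U, S, h1, h2, h3⟩ := ih M N hq
    exact ⟨B₁, B₂, U, S, h1, h2, sub_trans h3 hs⟩
  | bind h1 h2 =>
    intro M N hq
    injection hq with e1 e2; subst e1; subst e2
    exact ⟨_, _, _, _, h1, h2, sub_refl _ _⟩
  | base => intro _ _ hq; cases hq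
  | var _ => intro _ _ hq; cases hq
  | abs _ => intro _ _ hq; cases hq
  | app _ _ => intro _ _ hq; cases hq
  | fix _ => intro _ _ hq; cases hq
  | grd _ => intro _ _ hq; cases hq
  | chk _ => intro _ _ hq; cases hq
  | unit _ => intro _ _ hq; cases hq
  | modUp _ => intro _ _ hq; cases hq
  | modDn _ _ => intro _ _ hq; cases hq

theorem inv_modUp {Γ : List (Ty R)} {q : Tm R} {T : Ty R} (h : Typing false Γ q T) :
    ∀ B M, q = .mod (.up B) M →
      ∃ B₀ U, Typing false Γ M (.comp B₀ U) ∧ Sub false (.comp (B₀ ⊓ Bᶜ) U) T := by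
  induction h with
  | sub _ hs ih =>
    intro B M hq
    obtain ⟨B₀, U, h1, h2⟩ := ih B M hq
    exact ⟨B₀, U, h1, sub_trans h2 hs⟩
  | modUp h1 =>
    intro B M hq
    injection hq with e1 e2
    injection e1 with e1; subst e1; subst e2
    exact ⟨_, _, h1, sub_refl _ _⟩
  | modDn _ _ =>
    intro B M hq
    injection hq with e1 e2; cases e1
  | base => intro _ _ hq; cases hq
  | var _ => intro _ _ hq; cases hq
  | abs _ => intro _ _ hq; cases hq
  | app _ _ => intro _ _ hq; cases hq
  | fix _ => intro _ _ hq; cases hq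
  | grd _ => intro _ _ hq; cases hq
  | chk _ => intro _ _ hq; cases hq
  | unit _ => intro _ _ hq; cases hq
  | bind _ _ => intro _ _ hq; cases hq

theorem inv_modDn {Γ : List (Ty R)} {q : Tm R} {T : Ty R} (h : Typing false Γ q T) :
    ∀ B M, q = .mod (.dn B) M →
      ∃ B₀ U, Typing false Γ M (.comp B₀ U) ∧ Sub false (.comp B₀ U) T := by
  induction h with
  | sub _ hs ih =>
    intro B M hq
    obtain ⟨B₀, U, h1, h2⟩ := ih B M hq
    exact ⟨B₀, U, h1, sub_trans h2 hs⟩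
  | modDn h1 _ =>
    intro B M hq
    injection hq with e1 e2
    injection e1 with e1; subst e1; subst e2
    exact ⟨_, _, h1, sub_refl _ _⟩
  | modUp _ =>
    intro B M hq
    injection hq with e1 e2; cases e1
  | base => intro _ _ hq; cases hq
  | var _ => intro _ _ hq; cases hq
  | abs _ => intro _ _ hq; cases hq
  | app _ _ => intro _ _ hq; cases hq
  | fix _ => intro _ _ hq; cases hq
  | grd _ => intro _ _ hq; cases hq
  | chk _ => intro _ _ hq; cases hq
  | unit _ => intro _ _ hq; cases hq
  | bind _ _ => intro _ _ hq; cases hq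

theorem value_comp {Γ : List (Ty R)} {q : Tm R} {T : Ty R} (h : Typing false Γ q T) :
    Γ = [] → q.IsValue → ∀ B U, T = .comp B U →
      B ≤ ⊥ ∧ Typing false [] q (.comp ⊥ U) := by
  induction h with
  | sub h1 hs ih =>
    intro hΓ hv B U hT
    subst hT
    obtain ⟨B₁, U₁, hq1, hB1, hU1⟩ := sub_inv_comp_right hs
    obtain ⟨hb, ht⟩ := ih hΓ hv B₁ U₁ hq1
    exact ⟨le_trans hB1 hb, .sub ht (.comp (fun h => nomatch h) (fun _ => dom_of_le le_rfl) hU1)⟩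
  | unit h1 =>
    intro hΓ hv B U hT
    injection hT with e1 e2; subst e1; subst e2; subst hΓ
    exact ⟨le_rfl, .unit h1⟩
  | base => intro _ _ _ _ hT; cases hT
  | var hl => intro hΓ _ _ _ _; subst hΓ; simp at hl
  | abs _ => intro _ _ _ _ hT; cases hT
  | app _ _ => intro _ hv; cases hv
  | fix _ => intro _ hv; cases hv
  | grd _ => intro _ _ _ _ hT; cases hT
  | chk _ => intro _ hv; cases hv
  | bind _ _ => intro _ hv; cases hv
  | modUp _ => intro _ hv; cases hv
  | modDn _ _ => intro _ hv; cases hv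

end Aux4
section Pres
variable {R : Type*} [BooleanAlgebra R]

theorem aux_le1 {x a y : R} (h : x ≤ a ⊔ y) : x ≤ a ⊔ (x ⊓ y) := by
  calc x = x ⊓ (a ⊔ y) := (inf_eq_left.mpr h).symm
    _ = (x ⊓ a) ⊔ (x ⊓ y) := inf_sup_left x a y
    _ ≤ a ⊔ (x ⊓ y) := sup_le_sup_right inf_le_right _

theorem aux_le2 {x b y : R} (hc : x ≤ bᶜ) (h : x ≤ b ⊔ y) : x ≤ y := by
  calc x = x ⊓ (b ⊔ y) := (inf_eq_left.mpr h).symm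
    _ = (x ⊓ b) ⊔ (x ⊓ y) := inf_sup_left x b y
    _ ≤ ⊥ ⊔ y := sup_le_sup (le_trans (inf_le_inf_right b hc) (by simp)) inf_le_right
    _ = y := bot_sup_eq y

theorem sub_comp_mono {B B' : R} {U U' : Ty R} (hB : B' ≤ B) (hU : Sub false U U') :
    Sub false (.comp B U) (.comp B' U') :=
  .comp (fun h => nomatch h) (fun _ => dom_of_le hB) hU

theorem pres {A : R} {M M' : Tm R} (hE : Eval A M M') :
    ∀ {T : Ty R}, Typing false [] M T →
      ∃ T', Typing false [] M' T' ∧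
        (T' = T ∨ ∃ B B' U, T = .comp B U ∧ T' = .comp B' U ∧ B' ≤ B ∧ B ≤ A ⊔ B') := by
  induction hE with
  | @rApp A M N =>
    intro T h
    obtain ⟨S, T₁, habs, hN, hsub⟩ := inv_app h _ _ rfl
    obtain ⟨S', T', hb, hS, hT⟩ := inv_abs habs _ rfl S T₁ rfl
    have hN' : Typing false [] N S' := .sub hN hS
    have := subst_lemma hN' hb [] rfl
    exact ⟨T, .sub this (sub_trans hT hsub), Or.inl rfl⟩
  | @cApp A M M₀ N _ ih =>
    intro T h
    obtain ⟨S, T₁, hM, hN, hsub⟩ := inv_app h _ _ rfl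
    obtain ⟨T'', hM', hd⟩ := ih hM
    have : T'' = Ty.arrow S T₁ := by
      rcases hd with h | ⟨B, B', U, hB, _, _, _⟩
      · exact h
      · cases hB
    subst this
    exact ⟨T, .sub (.app hM' hN) hsub, Or.inl rfl⟩
  | @rFix A M =>
    intro T h
    obtain ⟨T₁, habs, hsub⟩ := inv_fix h _ rfl
    obtain ⟨S', T', hb, hS, hT⟩ := inv_abs habs _ rfl T₁ T₁ rfl
    have hfix : Typing false [] (.fix (.abs M)) S' := .sub (.fix habs) hS
    have := subst_lemma hfix hb [] rfl
    exact ⟨T, .sub this (sub_trans hT hsub), Or.inl rfl⟩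
  | @cFix A M M₀ _ ih =>
    intro T h
    obtain ⟨T₁, hM, hsub⟩ := inv_fix h _ rfl
    obtain ⟨T'', hM', hd⟩ := ih hM
    have : T'' = Ty.arrow T₁ T₁ := by
      rcases hd with h | ⟨B, B', U, hB, _, _, _⟩
      · exact h
      · cases hB
    subst this
    exact ⟨T, .sub (.fix hM') hsub, Or.inl rfl⟩
  | @rChk A C M hd =>
    intro T h
    obtain ⟨B, U, hg, hsub⟩ := inv_chk h _ rfl
    obtain ⟨B₂, U₂, hT, hB2, hU2⟩ := sub_inv_comp_left hsub
    obtain ⟨U₀, hM, hCB, hU0⟩ := inv_grd hg _ _ rfl B U rfl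
    refine ⟨.comp ⊥ U₂, .sub (.unit hM) (sub_comp_mono bot_le (sub_trans hU0 hU2)), Or.inr ?_⟩
    refine ⟨B₂, ⊥, U₂, hT, rfl, bot_le, ?_⟩
    have : B₂ ≤ A := le_trans hB2 (le_trans hCB (dom_iff.mp hd))
    simpa using this
  | @cChk A M M₀ _ ih =>
    intro T h
    obtain ⟨B, U, hM, hsub⟩ := inv_chk h _ rfl
    obtain ⟨T'', hM', hd⟩ := ih hM
    have : T'' = Ty.grd B U := by
      rcases hd with h | ⟨B₁, B', U₁, hB, _, _, _⟩
      · exact h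
      · cases hB
    subst this
    exact ⟨T, .sub (.chk hM') hsub, Or.inl rfl⟩
  | @rBind A M N =>
    intro T h
    obtain ⟨B₁, B₂, U, S, hu, hN, hsub⟩ := inv_bind h _ _ rfl
    obtain ⟨B₃, S₃, hT, hB3, hS3⟩ := sub_inv_comp_left hsub
    obtain ⟨U', hM, hB1, hU'⟩ := inv_unit hu _ rfl B₁ U rfl
    have hMU : Typing false [] M U := .sub hM hU'
    have hsubN := subst_lemma hMU hN [] rfl
    have hB3' : B₃ ≤ B₂ := le_trans hB3 (sup_le (le_trans hB1 bot_le) le_rfl)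
    exact ⟨T, .sub hsubN (hT ▸ sub_comp_mono hB3' hS3), Or.inl rfl⟩
  | @cBind A M M₀ N _ ih =>
    intro T h
    obtain ⟨B₁, B₂, U, S, hM, hN, hsub⟩ := inv_bind h _ _ rfl
    obtain ⟨B₃, S₃, hT, hB3, hS3⟩ := sub_inv_comp_left hsub
    obtain ⟨T'', hM', hd⟩ := ih hM
    obtain ⟨B₁', hM'', hle, hcov⟩ :
        ∃ B₁', Typing false [] M₀ (.comp B₁' U) ∧ B₁' ≤ B₁ ∧ B₁ ≤ A ⊔ B₁' := by
      rcases hd with h | ⟨B, B', U₁, hB, hB', h1, h2⟩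
      · exact ⟨B₁, h ▸ hM', le_rfl, le_sup_right⟩
      · injection hB with e1 e2; subst e1; subst e2
        exact ⟨B', hB' ▸ hM', h1, h2⟩
    have hbind : Typing false [] (.bind M₀ N) (.comp (B₁' ⊔ B₂) S) := .bind hM'' hN
    refine ⟨.comp (B₃ ⊓ (B₁' ⊔ B₂)) S₃,
      .sub hbind (sub_comp_mono inf_le_right hS3), Or.inr ?_⟩
    refine ⟨B₃, B₃ ⊓ (B₁' ⊔ B₂), S₃, hT, rfl, inf_le_left, ?_⟩
    have : B₃ ≤ A ⊔ (B₁' ⊔ B₂) :=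
      le_trans hB3 (le_trans (sup_le_sup_right hcov B₂) (le_of_eq (sup_assoc A B₁' B₂)))
    exact aux_le1 this
  | @rMod A m V hv =>
    intro T h
    cases m with
    | up B =>
      obtain ⟨B₀, U, hV, hsub⟩ := inv_modUp h _ _ rfl
      obtain ⟨B₃, U₃, hT, hB3, hU3⟩ := sub_inv_comp_left hsub
      obtain ⟨hb0, hV'⟩ := value_comp hV rfl hv B₀ U rfl
      have hB3' : B₃ ≤ ⊥ := le_trans hB3 (le_trans inf_le_left hb0)
      exact ⟨T, .sub hV' (hT ▸ sub_comp_mono hB3' hU3), Or.inl rfl⟩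
    | dn B =>
      obtain ⟨B₀, U, hV, hsub⟩ := inv_modDn h _ _ rfl
      obtain ⟨B₃, U₃, hT, hB3, hU3⟩ := sub_inv_comp_left hsub
      obtain ⟨hb0, hV'⟩ := value_comp hV rfl hv B₀ U rfl
      have hB3' : B₃ ≤ ⊥ := le_trans hB3 hb0
      exact ⟨T, .sub hV' (hT ▸ sub_comp_mono hB3' hU3), Or.inl rfl⟩
  | @cMod A m M M₀ _ ih =>
    intro T h
    cases m with
    | up B =>
      obtain ⟨B₀, U, hM, hsub⟩ := inv_modUp h _ _ rfl
      obtain ⟨B₃, U₃, hT, hB3, hU3⟩ := sub_inv_comp_left hsub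
      obtain ⟨T'', hM', hd⟩ := ih hM
      obtain ⟨B₀', hM'', hle, hcov⟩ :
          ∃ B₀', Typing false [] M₀ (.comp B₀' U) ∧ B₀' ≤ B₀ ∧ B₀ ≤ (B ⊔ A) ⊔ B₀' := by
        rcases hd with h | ⟨Bx, B', U₁, hB, hB', h1, h2⟩
        · exact ⟨B₀, h ▸ hM', le_rfl, le_sup_right⟩
        · injection hB with e1 e2; subst e1; subst e2
          exact ⟨B', hB' ▸ hM', h1, h2⟩
      have hmod : Typing false [] (.mod (.up B) M₀) (.comp (B₀' ⊓ Bᶜ) U) := .modUp hM''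
      have hty : Typing false [] (.mod (.up B) M₀) (.comp (B₃ ⊓ B₀') U₃) :=
        .sub hmod (sub_comp_mono
          (le_inf inf_le_right (le_trans inf_le_left (le_trans hB3 inf_le_right))) hU3)
      refine ⟨.comp (B₃ ⊓ B₀') U₃, hty, Or.inr ⟨B₃, B₃ ⊓ B₀', U₃, hT, rfl, inf_le_left, ?_⟩⟩
      have h1 : B₃ ≤ Bᶜ := le_trans hB3 inf_le_right
      have hcov' : B₀ ≤ (B ⊔ A) ⊔ B₀' := hcov
      have h2 : B₃ ≤ B ⊔ (A ⊔ B₀') :=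
        le_trans hB3 (le_trans inf_le_left (le_trans hcov' (le_of_eq (sup_assoc B A B₀'))))
      exact aux_le1 (aux_le2 h1 h2)
    | dn B =>
      obtain ⟨B₀, U, hM, hsub⟩ := inv_modDn h _ _ rfl
      obtain ⟨B₃, U₃, hT, hB3, hU3⟩ := sub_inv_comp_left hsub
      obtain ⟨T'', hM', hd⟩ := ih hM
      obtain ⟨B₀', hM'', hle, hcov⟩ :
          ∃ B₀', Typing false [] M₀ (.comp B₀' U) ∧ B₀' ≤ B₀ ∧ B₀ ≤ A ⊔ B₀' := by
        rcases hd with h | ⟨Bx, B', U₁, hB, hB', h1, h2⟩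
        · exact ⟨B₀, h ▸ hM', le_rfl, le_sup_right⟩
        · injection hB with e1 e2; subst e1; subst e2
          have h2' : B₀ ≤ (B ⊓ A) ⊔ B' := h2
          exact ⟨B', hB' ▸ hM', h1, le_trans h2' (sup_le_sup_right inf_le_right B')⟩
      have hmod : Typing false [] (.mod (.dn B) M₀) (.comp B₀' U) :=
        .modDn hM'' (fun h => nomatch h)
      have hty : Typing false [] (.mod (.dn B) M₀) (.comp (B₃ ⊓ B₀') U₃) :=
        .sub hmod (sub_comp_mono inf_le_right hU3)
      refine ⟨.comp (B₃ ⊓ B₀') U₃, hty, Or.inr ⟨B₃, B₃ ⊓ B₀', U₃, hT, rfl, inf_le_left, ?_⟩⟩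
      exact aux_le1 (le_trans hB3 hcov)
end Pres
section Main
variable {R : Type*} [BooleanAlgebra R]

theorem main_lemma {A : R} {M V : Tm R} (hE : Relation.ReflTransGen (Eval A) M V)
    (hV : V.IsValue) : ∀ T, Typing false [] M T → DomTy A T := by
  induction hE using Relation.ReflTransGen.head_induction_on with
  | refl =>
    intro T hT
    cases T with
    | comp B U => exact dom_of_le (le_trans (value_comp hT rfl hV B U rfl).1 bot_le)
    | base => trivial
    | arrow _ _ => trivial
    | grd _ _ => trivial
  | head step _ ih =>
    intro T hT
    obtain ⟨T', hT', hd⟩ := pres step hT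
    rcases hd with rfl | ⟨B, B', U, rfl, rfl, h1, h2⟩
    · exact ih _ hT'
    · have hB' : dom A B' := ih _ hT'
      show dom A B
      exact dom_of_le (le_trans h2 (sup_le le_rfl (dom_iff.mp hB')))
end Main

end LRBAC


/-- Terminating well-typed terms (system 2) have dominated types. -/
theorem stmt_19 (R : Type*) [BooleanAlgebra R] (A : R) (M V : Tm R) (T : Ty R)
    (hT : Typing false [] M T) (hE : Evals A M V) (hV : V.IsValue) :
    DomTy A T := by
  exact LRBAC.main_lemma hE hV T hT
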